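/- For the direct product G = K_{n1} × K_{n2} with 3 ≤ n1 ≤ n2, the irredundance number satisfies ir(G) = 3. -/

import Mathlib

open SimpleGraph

def unitaryCayley (n : ℕ) : SimpleGraph (ZMod n) where
  Adj a b := a ≠ b ∧ IsUnit (a - b)
  symm := by
    constructor; rintro a b ⟨h1, h2⟩
    refine ⟨h1.symm, ?_⟩
    rw [← neg_sub]
    exact h2.neg
  loopless := by constructor; rintro a ⟨h, _⟩; exact h rfl

def tensorProd {α β : Type*} (G : SimpleGraph α) (H : SimpleGraph β) :
    SimpleGraph (α × β) where
  Adj x y := G.Adj x.1 y.1 ∧ H.Adj x.2 y.2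
  symm := by constructor; rintro x y ⟨h1, h2⟩; exact ⟨h1.symm, h2.symm⟩
  loopless := by constructor; rintro x ⟨h, _⟩; exact G.loopless.irrefl _ h

def tensorPi {ι : Type*} {α : ι → Type*} (G : ∀ i, SimpleGraph (α i)) :
    SimpleGraph (∀ i, α i) where
  Adj x y := x ≠ y ∧ ∀ i, (G i).Adj (x i) (y i)
  symm := by constructor; rintro x y ⟨h1, h2⟩; exact ⟨h1.symm, fun i => (h2 i).symm⟩
  loopless := by constructor; rintro x ⟨h, _⟩; exact h rfl

/-- The balanced complete multipartite graph `K[a,b]`: `b` parts of size `a`. -/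
def multipartite (a b : ℕ) : SimpleGraph (Fin a × Fin b) where
  Adj x y := x.2 ≠ y.2
  symm := by constructor; rintro x y h; exact h.symm
  loopless := by constructor; rintro x h; exact h rfl

def prodComplete2 (n1 n2 : ℕ) : SimpleGraph (Fin n1 × Fin n2) :=
  tensorProd (completeGraph (Fin n1)) (completeGraph (Fin n2))

def prodComplete3 (n1 n2 n3 : ℕ) : SimpleGraph (Fin n1 × Fin n2 × Fin n3) :=
  tensorProd (completeGraph (Fin n1)) (prodComplete2 n2 n3)

def prodCompletePi (t : ℕ) (n : Fin t → ℕ) : SimpleGraph (∀ i, Fin (n i)) :=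
  tensorPi fun i => completeGraph (Fin (n i))

def prodMultipartite (t : ℕ) (a b : Fin t → ℕ) :
    SimpleGraph (∀ i, Fin (a i) × Fin (b i)) :=
  tensorPi fun i => multipartite (a i) (b i)

def IsDominating {V : Type*} (G : SimpleGraph V) (S : Set V) : Prop :=
  ∀ v, v ∈ S ∨ ∃ u ∈ S, G.Adj u v

def IsTotalDominating {V : Type*} (G : SimpleGraph V) (S : Set V) : Prop :=
  ∀ v, ∃ u ∈ S, G.Adj u v

def IsIndep {V : Type*} (G : SimpleGraph V) (S : Set V) : Prop :=
  ∀ u ∈ S, ∀ v ∈ S, ¬ G.Adj u v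

def closedNbhd {V : Type*} (G : SimpleGraph V) (v : V) : Set V :=
  {u | u = v ∨ G.Adj v u}

def IsIrredundant {V : Type*} (G : SimpleGraph V) (S : Set V) : Prop :=
  ∀ v ∈ S, ∃ u ∈ closedNbhd G v, ∀ w ∈ S, w ≠ v → u ∉ closedNbhd G w

noncomputable def domNum {V : Type*} (G : SimpleGraph V) : ℕ :=
  sInf {k | ∃ S : Set V, IsDominating G S ∧ S.ncard = k}

noncomputable def totalDomNum {V : Type*} (G : SimpleGraph V) : ℕ :=
  sInf {k | ∃ S : Set V, IsTotalDominating G S ∧ S.ncard = k}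

noncomputable def irNum {V : Type*} (G : SimpleGraph V) : ℕ :=
  sInf {k | ∃ S : Set V, Maximal (IsIrredundant G) S ∧ S.ncard = k}

noncomputable def iNum {V : Type*} (G : SimpleGraph V) : ℕ :=
  sInf {k | ∃ S : Set V, Maximal (IsIndep G) S ∧ S.ncard = k}

noncomputable def alphaNum {V : Type*} (G : SimpleGraph V) : ℕ :=
  sSup {k | ∃ S : Set V, IsIndep G S ∧ S.ncard = k}

noncomputable def upperDomNum {V : Type*} (G : SimpleGraph V) : ℕ :=
  sSup {k | ∃ S : Set V, Minimal (IsDominating G) S ∧ S.ncard = k}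

noncomputable def IRNum {V : Type*} (G : SimpleGraph V) : ℕ :=
  sSup {k | ∃ S : Set V, IsIrredundant G S ∧ S.ncard = k}

/-- The Jacobsthal function: least `m > 0` such that any `m` consecutive integers
contain one coprime to `n`. -/
noncomputable def jacobsthal (n : ℕ) : ℕ :=
  sInf {m | 0 < m ∧ ∀ x : ℤ, ∃ i : ℕ, i < m ∧ Int.gcd (x + i) n = 1}

/-!
A triangle `{(a, b), (c, d), (e, f)}` (pairwise distinct first and pairwise distinct second
coordinates) is irredundant, `(c, f)` being a private neighbour of `(a, b)`, and every vertex is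
adjacent to one of its vertices; so it is a maximal irredundant set of size 3. Conversely a set of
at most two vertices lies in some `{v, w}`, and a third vertex `x` makes `{x, v, w}` irredundant:
take `x` on the common line of `v` and `w` when they share a coordinate (an independent set), and
a vertex completing a triangle otherwise. Irredundance is inherited by subsets, so no set of fewer
than three vertices is maximal irredundant.
-/

section Irredundance

variable {V : Type*} {G : SimpleGraph V} {S T : Set V}

theorem IsIndep.isIrredundant (h : IsIndep G S) : IsIrredundant G S := by
  intro v hv
  refine ⟨v, Or.inl rfl, fun w hw hwv hvw => ?_⟩
  rcases hvw with rfl | hadj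
  · exact hwv rfl
  · exact h w hw v hv hadj

theorem IsIrredundant.mono (hT : IsIrredundant G T) (hST : S ⊆ T) : IsIrredundant G S := by
  intro v hv
  obtain ⟨u, hu, hpriv⟩ := hT v (hST hv)
  exact ⟨u, hu, fun w hw => hpriv w (hST hw)⟩

theorem IsIrredundant.maximal_of_isDominating (hirr : IsIrredundant G S)
    (hdom : IsDominating G S) : Maximal (IsIrredundant G) S := by
  refine ⟨hirr, fun T hT hST x hxT => ?_⟩
  by_contra hxS
  obtain ⟨u, hu, hpriv⟩ := hT x hxT
  have hdom_u : ∃ s ∈ S, u ∈ closedNbhd G s := by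
    rcases hdom u with huS | ⟨s, hs, hsu⟩
    · exact ⟨u, huS, Or.inl rfl⟩
    · exact ⟨s, hs, Or.inr hsu⟩
  obtain ⟨s, hs, hus⟩ := hdom_u
  exact hpriv s (hST hs) (fun hsx => hxS (hsx ▸ hs)) hus

end Irredundance

theorem Set.exists_subset_pair_of_ncard_le_two {α : Type*} [Nonempty α] {s : Set α}
    (hs : s.Finite) (h : s.ncard ≤ 2) : ∃ a b, s ⊆ {a, b} := by
  by_contra! hsub
  obtain ⟨a, ha, -⟩ := Set.not_subset.1 (hsub (Classical.arbitrary α) (Classical.arbitrary α))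
  obtain ⟨b, hb, hab⟩ := Set.not_subset.1 (hsub a a)
  obtain ⟨c, hc, habc⟩ := Set.not_subset.1 (hsub a b)
  simp only [Set.mem_insert_iff, Set.mem_singleton_iff, or_self, not_or] at hab habc
  have := (Set.two_lt_ncard_iff hs).2
    ⟨a, b, c, ha, hb, hc, Ne.symm hab, Ne.symm habc.1, Ne.symm habc.2⟩
  omega

theorem Fintype.exists_ne_ne_of_three_le_card {α : Type*} [Fintype α]
    (h : 3 ≤ Fintype.card α) (a b : α) : ∃ c, c ≠ a ∧ c ≠ b := by
  classical
  obtain ⟨c, -, hc⟩ := Finset.exists_mem_notMem_of_card_lt_card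
    (s := {a, b}) (t := Finset.univ) (Finset.card_le_two.trans_lt (by simp; omega))
  simp only [Finset.mem_insert, Finset.mem_singleton, not_or] at hc
  exact ⟨c, hc⟩

section TensorProd

variable {α β : Type*} {G : SimpleGraph α} {H : SimpleGraph β} {S : Set (α × β)}

theorem isIndep_tensorProd_of_fst_eq {a : α} (h : ∀ u ∈ S, u.1 = a) :
    IsIndep (tensorProd G H) S :=
  fun u hu v hv hadj => G.loopless.irrefl a (by simpa only [h u hu, h v hv] using hadj.1)

theorem isIndep_tensorProd_of_snd_eq {b : β} (h : ∀ u ∈ S, u.2 = b) :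
    IsIndep (tensorProd G H) S :=
  fun u hu v hv hadj => H.loopless.irrefl b (by simpa only [h u hu, h v hv] using hadj.2)

end TensorProd

section CompleteTensorProd

variable {α β : Type*}

local notation "K" => tensorProd (completeGraph α) (completeGraph β)

theorem private_mem_closedNbhd_of_triangle {u v w : α × β} (huv : Adj K u v) (huw : Adj K u w)
    (hvw : Adj K v w) :
    (v.1, w.2) ∈ closedNbhd K u ∧ (v.1, w.2) ∉ closedNbhd K v ∧ (v.1, w.2) ∉ closedNbhd K w := by
  refine ⟨Or.inr ⟨huv.1, huw.2⟩, ?_, ?_⟩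
  · rintro (h | h)
    · exact hvw.2 (Prod.ext_iff.1 h).2.symm
    · exact h.1 rfl
  · rintro (h | h)
    · exact hvw.1 (Prod.ext_iff.1 h).1
    · exact h.2 rfl

theorem isIrredundant_triangle {u v w : α × β} (huv : Adj K u v) (huw : Adj K u w)
    (hvw : Adj K v w) : IsIrredundant K {u, v, w} := by
  have hpriv : ∀ {x y z : α × β}, Adj K x y → Adj K x z → Adj K y z →
      ∃ p ∈ closedNbhd K x, ∀ t ∈ ({x, y, z} : Set (α × β)), t ≠ x → p ∉ closedNbhd K t := by
    intro x y z hxy hxz hyz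
    obtain ⟨hx, hy, hz⟩ := private_mem_closedNbhd_of_triangle hxy hxz hyz
    refine ⟨_, hx, ?_⟩
    rintro t (rfl | rfl | rfl) ht
    exacts [absurd rfl ht, hy, hz]
  rintro x (rfl | rfl | rfl)
  · exact hpriv huv huw hvw
  · rw [Set.insert_comm, Set.pair_comm]
    exact hpriv hvw huv.symm huw.symm
  · rw [Set.pair_comm, Set.insert_comm]
    exact hpriv huw.symm hvw.symm huv

theorem exists_adj_of_triangle {u v w : α × β} (huv : Adj K u v) (huw : Adj K u w)
    (hvw : Adj K v w) (t : α × β) : ∃ s ∈ ({u, v, w} : Set (α × β)), Adj K s t := by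
  -- Each of u, v, w not adjacent to t shares a coordinate with t; by pigeonhole two of them
  -- share the same one, so they are not adjacent to each other.
  by_contra! h
  simp only [Set.mem_insert_iff, Set.mem_singleton_iff, forall_eq_or_imp, forall_eq] at h
  simp only [tensorProd, completeGraph, top_adj] at *
  grind

theorem maximal_isIrredundant_triangle {u v w : α × β} (huv : Adj K u v) (huw : Adj K u w)
    (hvw : Adj K v w) : Maximal (IsIrredundant K) {u, v, w} :=
  (isIrredundant_triangle huv huw hvw).maximal_of_isDominating
    fun t => Or.inr (exists_adj_of_triangle huv huw hvw t)

variable [Fintype α] [Fintype β]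

theorem exists_isIrredundant_insert_pair (hα : 3 ≤ Fintype.card α) (hβ : 3 ≤ Fintype.card β)
    (v w : α × β) : ∃ x, x ≠ v ∧ x ≠ w ∧ IsIrredundant K {x, v, w} := by
  obtain ⟨e, hev, hew⟩ := Fintype.exists_ne_ne_of_three_le_card hα v.1 w.1
  obtain ⟨f, hfv, hfw⟩ := Fintype.exists_ne_ne_of_three_le_card hβ v.2 w.2
  by_cases hfst : v.1 = w.1
  · refine ⟨(v.1, f), fun h => hfv (Prod.ext_iff.1 h).2, fun h => hfw (Prod.ext_iff.1 h).2,
      (isIndep_tensorProd_of_fst_eq (a := v.1) ?_).isIrredundant⟩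
    rintro t (rfl | rfl | rfl)
    exacts [rfl, rfl, hfst.symm]
  by_cases hsnd : v.2 = w.2
  · refine ⟨(e, v.2), fun h => hev (Prod.ext_iff.1 h).1, fun h => hew (Prod.ext_iff.1 h).1,
      (isIndep_tensorProd_of_snd_eq (b := v.2) ?_).isIrredundant⟩
    rintro t (rfl | rfl | rfl)
    exacts [rfl, rfl, hsnd.symm]
  have hxv : Adj K (e, f) v := ⟨hev, hfv⟩
  have hxw : Adj K (e, f) w := ⟨hew, hfw⟩
  exact ⟨(e, f), hxv.ne, hxw.ne, isIrredundant_triangle hxv hxw ⟨hfst, hsnd⟩⟩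

theorem three_le_ncard_of_maximal_isIrredundant (hα : 3 ≤ Fintype.card α)
    (hβ : 3 ≤ Fintype.card β) {S : Set (α × β)} (hS : Maximal (IsIrredundant K) S) :
    3 ≤ S.ncard := by
  by_contra! hlt
  have : Nonempty α := Fintype.card_pos_iff.1 (by omega)
  have : Nonempty β := Fintype.card_pos_iff.1 (by omega)
  obtain ⟨v, w, hvw⟩ := Set.exists_subset_pair_of_ncard_le_two S.toFinite (by omega)
  obtain ⟨x, hxv, hxw, hirr⟩ := exists_isIrredundant_insert_pair hα hβ v w
  have hxS : x ∈ S := hS.mem_of_prop_insert (hirr.mono (Set.insert_subset_insert hvw))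
  rcases hvw hxS with rfl | rfl
  exacts [hxv rfl, hxw rfl]

theorem exists_maximal_isIrredundant_ncard_three (hα : 3 ≤ Fintype.card α)
    (hβ : 3 ≤ Fintype.card β) : ∃ S : Set (α × β), Maximal (IsIrredundant K) S ∧ S.ncard = 3 := by
  obtain ⟨a₁, a₂, a₃, h₁₂, h₁₃, h₂₃⟩ := Fintype.two_lt_card_iff.1 hα
  obtain ⟨b₁, b₂, b₃, h₁₂', h₁₃', h₂₃'⟩ := Fintype.two_lt_card_iff.1 hβ
  have huv : Adj K (a₁, b₁) (a₂, b₂) := ⟨h₁₂, h₁₂'⟩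
  have huw : Adj K (a₁, b₁) (a₃, b₃) := ⟨h₁₃, h₁₃'⟩
  have hvw : Adj K (a₂, b₂) (a₃, b₃) := ⟨h₂₃, h₂₃'⟩
  exact ⟨_, maximal_isIrredundant_triangle huv huw hvw,
    Set.ncard_eq_three.2 ⟨_, _, _, huv.ne, huw.ne, hvw.ne, rfl⟩⟩

theorem irNum_tensorProd_completeGraph (hα : 3 ≤ Fintype.card α) (hβ : 3 ≤ Fintype.card β) :
    irNum K = 3 := by
  obtain ⟨S, hS, hcard⟩ := exists_maximal_isIrredundant_ncard_three hα hβ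
  refine le_antisymm (Nat.sInf_le ⟨S, hS, hcard⟩) (le_csInf ⟨3, S, hS, hcard⟩ ?_)
  rintro k ⟨T, hT, rfl⟩
  exact three_le_ncard_of_maximal_isIrredundant hα hβ hT

end CompleteTensorProd

theorem stmt8 (n1 n2 : ℕ) (h1 : 3 ≤ n1) (h12 : n1 ≤ n2) :
    irNum (prodComplete2 n1 n2) = 3 :=
  irNum_tensorProd_completeGraph (by simpa using h1) (by simpa using h1.trans h12)
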